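/- Let A₀ be an n×n symmetric positive-definite real matrix, let u₁, …, u_T ∈ ℝⁿ, and set A_t = A_{t−1} + u_t u_tᵀ for t = 1, …, T. Then Σ_{t=1}^{T} u_tᵀ A_t^{−1} u_t ≤ log(det(A_T)/det(A₀)). -/

import Mathlib

open Matrix

lemma vecMulVec_mulVec' {n : ℕ} (u x : Fin n → ℝ) :
    (vecMulVec u u) *ᵥ x = (u ⬝ᵥ x) • u := by
  ext j
  simp [mulVec, vecMulVec_apply, dotProduct, Finset.mul_sum, mul_comm, mul_left_comm]

lemma vecMulVec_posSemidef {n : ℕ} (u : Fin n → ℝ) : (vecMulVec u u).PosSemidef := by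
  rw [posSemidef_iff_dotProduct_mulVec]
  constructor
  · ext i j; simp [vecMulVec_apply, conjTranspose_apply, mul_comm]
  · intro x
    rw [vecMulVec_mulVec', dotProduct_smul]
    have : x ⬝ᵥ u = u ⬝ᵥ x := dotProduct_comm x u
    simp only [RCLike.star_def, starRingEnd_apply, star_trivial, smul_eq_mul, this]
    exact mul_self_nonneg _

lemma key_step {n : ℕ} {A B : Matrix (Fin n) (Fin n) ℝ} (hA : A.PosDef) (u : Fin n → ℝ)
    (hB : B = A + vecMulVec u u) :
    u ⬝ᵥ B⁻¹ *ᵥ u = 1 - A.det / B.det := by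
  have hBpd : B.PosDef := hB ▸ hA.add_posSemidef (vecMulVec_posSemidef u)
  have hdet : IsUnit B.det := isUnit_iff_ne_zero.2 hBpd.det_pos.ne'
  have hAB : A = B + replicateCol Unit (-u) * replicateRow Unit u := by
    rw [hB, ← vecMulVec_eq Unit]
    ext i j
    simp [vecMulVec_apply, Matrix.add_apply]
  have h := det_add_replicateCol_mul_replicateRow (ι := Unit) hdet (-u) u
  rw [← hAB] at h
  have h1 : (1 + replicateRow Unit u * B⁻¹ * replicateCol Unit (-u)).det = 1 - u ⬝ᵥ B⁻¹ *ᵥ u := by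
    rw [det_unique]
    simp [Matrix.mul_apply, replicateRow, replicateCol, dotProduct, mulVec, Finset.mul_sum, Finset.sum_mul]
    rw [sub_eq_add_neg]
    congr 1
    congr 1
    rw [Finset.sum_comm]
    apply Finset.sum_congr rfl; intro i _
    apply Finset.sum_congr rfl; intro j _
    ring
  rw [h1] at h
  have hBne : B.det ≠ 0 := hBpd.det_pos.ne'
  field_simp [h]
  rw [h]; ring

lemma posdef_all {n : ℕ} (T : ℕ) (A : ℕ → Matrix (Fin n) (Fin n) ℝ) (hA0 : (A 0).PosDef)
    (u : ℕ → Fin n → ℝ)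
    (hAt : ∀ t, 1 ≤ t → t ≤ T → A t = A (t-1) + Matrix.vecMulVec (u t) (u t)) :
    ∀ t, t ≤ T → (A t).PosDef := by
  intro t
  induction t with
  | zero => intro _; exact hA0
  | succ k ih =>
    intro hk
    have := hAt (k+1) (Nat.le_add_left 1 k) hk
    simp only [Nat.add_sub_cancel] at this
    exact this ▸ (ih (Nat.le_of_succ_le hk)).add_posSemidef (vecMulVec_posSemidef (u (k+1)))


/-- for a symmetric positive-definite `A₀` and rank-one updates
`A_t = A_{t−1} + u_t u_tᵀ`, one has
`Σ_{t=1}^T u_tᵀ A_t⁻¹ u_t ≤ log(det A_T / det A₀)`. -/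
theorem sum_quadratic_le_log_det_ratio {n : ℕ} (T : ℕ)
    (A : ℕ → Matrix (Fin n) (Fin n) ℝ) (hA0 : (A 0).PosDef)
    (u : ℕ → Fin n → ℝ)
    (hAt : ∀ t, 1 ≤ t → t ≤ T → A t = A (t-1) + Matrix.vecMulVec (u t) (u t)) :
    ∑ t ∈ Finset.Icc 1 T, (u t) ⬝ᵥ ((A t)⁻¹).mulVec (u t) ≤
      Real.log ((A T).det / (A 0).det) := by
  induction T with
  | zero => simp [div_self hA0.det_pos.ne']
  | succ T ih =>
    have hAt' : ∀ t, 1 ≤ t → t ≤ T → A t = A (t-1) + Matrix.vecMulVec (u t) (u t) :=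
      fun t h1 h2 => hAt t h1 (Nat.le_succ_of_le h2)
    have hpd : ∀ t, t ≤ T + 1 → (A t).PosDef := posdef_all (T+1) A hA0 u hAt
    have hT : (A T).PosDef := hpd T (Nat.le_succ T)
    have hT1 : (A (T+1)).PosDef := hpd (T+1) le_rfl
    have hrec : A (T+1) = A T + Matrix.vecMulVec (u (T+1)) (u (T+1)) := by
      have := hAt (T+1) (Nat.le_add_left 1 T) le_rfl
      simpa using this
    rw [Finset.sum_Icc_succ_top (Nat.le_add_left 1 T)]
    have hkey := key_step hT (u (T+1)) hrec
    have hz : (0:ℝ) < (A T).det / (A (T+1)).det := div_pos hT.det_pos hT1.det_pos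
    have hlog : Real.log ((A T).det / (A (T+1)).det) ≤ (A T).det / (A (T+1)).det - 1 :=
      Real.log_le_sub_one_of_pos hz
    have hstep : (u (T+1)) ⬝ᵥ ((A (T+1))⁻¹).mulVec (u (T+1)) ≤
        Real.log ((A (T+1)).det / (A T).det) := by
      rw [hkey]
      rw [Real.log_div hT1.det_pos.ne' hT.det_pos.ne']
      rw [Real.log_div hT.det_pos.ne' hT1.det_pos.ne'] at hlog
      linarith
    have hsplit : Real.log ((A (T+1)).det / (A 0).det) =
        Real.log ((A T).det / (A 0).det) + Real.log ((A (T+1)).det / (A T).det) := by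
      rw [Real.log_div hT1.det_pos.ne' hA0.det_pos.ne',
        Real.log_div hT.det_pos.ne' hA0.det_pos.ne',
        Real.log_div hT1.det_pos.ne' hT.det_pos.ne']
      ring
    rw [hsplit]
    exact add_le_add (ih hAt') hstep
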